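/- arXiv:2410.23461 — 3 statements merged into one kernel-verified Lean document; each statement's English description precedes it below -/
import Mathlib

section
/- For every k ∈ ℕ there exist a set X, a hypothesis class H ⊆ {-1,1}^X with VC dimension 1, and a collection of transformations T of X such that the VC dimension of H ∘ T is at least k. -/
/-- A class `F` of Bool-valued functions shatters a finite set `S` if every
labeling of `S` is realized by some member of `F`. -/
def Shatters {X : Type*} (F : Set (X → Bool)) (S : Finset X) : Prop :=
  ∀ g : X → Bool, ∃ f ∈ F, ∀ x ∈ S, f x = g x

/-- The VC dimension of a class of Bool-valued functions, as an extended natural. -/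
noncomputable def vcDim {X : Type*} (F : Set (X → Bool)) : ℕ∞ :=
  ⨆ (S : Finset X) (_ : Shatters F S), (S.card : ℕ∞)

/-!
If the negative regions `f ⁻¹' {false}` of the members of a class are pairwise disjoint, no two
points are shattered: a classifier negative on both points and one negative only on the first
would share a negative point, hence coincide. Over base points `x_i`, `i ∈ ι`, we add for every
labeling `σ : ι → Bool` fresh copies `T_σ(x_i)`, let `h_σ` be negative exactly on the copies
`T_σ(x_i)` with `σ i = false`, and let `t_σ` send `x_i` to `T_σ(x_i)`. The negative regions of
the `h_σ` are disjoint, so the class has VC dimension `1`, while `h_σ ∘ t_σ` realizes `σ` on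
the base points, which are therefore shattered by the compositions.
-/

section VCDimension

variable {X : Type*} {F : Set (X → Bool)}

theorem Shatters.card_le_vcDim {S : Finset X} (hS : Shatters F S) : (S.card : ℕ∞) ≤ vcDim F :=
  le_iSup₂ (f := fun (S : Finset X) (_ : Shatters F S) => (S.card : ℕ∞)) S hS

theorem vcDim_le_iff {n : ℕ∞} : vcDim F ≤ n ↔ ∀ S, Shatters F S → (S.card : ℕ∞) ≤ n :=
  iSup₂_le_iff

theorem shatters_singleton {f g : X → Bool} (hf : f ∈ F) (hg : g ∈ F) {x : X}
    (hfx : f x = true) (hgx : g x = false) : Shatters F {x} := by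
  intro l
  cases hl : l x
  · exact ⟨g, hg, by simpa [hl] using hgx⟩
  · exact ⟨f, hf, by simpa [hl] using hfx⟩

theorem vcDim_le_one_of_pairwiseDisjoint (hF : F.PairwiseDisjoint (· ⁻¹' {false})) :
    vcDim F ≤ 1 := by
  classical
  refine vcDim_le_iff.2 fun S hS => ?_
  by_contra! hcard
  obtain ⟨a, ha, b, hb, hab⟩ := Finset.one_lt_card.1 (by exact_mod_cast hcard)
  obtain ⟨f, hfF, hf⟩ := hS fun _ => false
  obtain ⟨g, hgF, hg⟩ := hS fun x => decide (x = b)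
  have hfg : f = g := hF.elim_set hfF hgF a (by simpa using hf a ha) (by simpa [hab] using hg a ha)
  simpa [hfg, hg b hb] using hf b hb

end VCDimension

section Blowup

variable {ι : Type}

/-- `inl i` is the base point `x_i` and `inr (σ, i)` its copy `T_σ(x_i)`; copies are indexed by
labelings `σ` of the base points rather than by the `k`-subsets of the informal construction. -/
abbrev BlowupSpace (ι : Type) : Type := ι ⊕ ((ι → Bool) × ι)

open Classical in
noncomputable def blowupHyp (σ : ι → Bool) : BlowupSpace ι → Bool
  | .inl _ => true
  | .inr (τ, i) => if τ = σ then σ i else true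

def blowupMap (σ : ι → Bool) : BlowupSpace ι → BlowupSpace ι
  | .inl i => .inr (σ, i)
  | .inr p => .inr p

theorem exists_eq_inr_of_blowupHyp_eq_false {σ : ι → Bool} {x : BlowupSpace ι}
    (hx : blowupHyp σ x = false) : ∃ i, x = .inr (σ, i) := by
  rcases x with i | ⟨τ, i⟩
  · simp [blowupHyp] at hx
  · by_cases hτ : τ = σ
    · exact ⟨i, by rw [hτ]⟩
    · simp [blowupHyp, hτ] at hx

theorem blowupHyp_inr_self (σ : ι → Bool) (i : ι) : blowupHyp σ (.inr (σ, i)) = σ i := by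
  simp [blowupHyp]

theorem blowupHyp_const_true : blowupHyp (fun _ : ι => true) = fun _ => true := by
  funext x
  rcases x with i | ⟨τ, i⟩ <;> simp [blowupHyp]

theorem pairwiseDisjoint_range_blowupHyp :
    (Set.range (blowupHyp (ι := ι))).PairwiseDisjoint (· ⁻¹' {false}) := by
  rintro _ ⟨σ, rfl⟩ _ ⟨τ, rfl⟩ hne
  refine Set.disjoint_left.2 fun x hσ hτ => hne ?_
  obtain ⟨i, rfl⟩ := exists_eq_inr_of_blowupHyp_eq_false hσ
  obtain ⟨j, hij⟩ := exists_eq_inr_of_blowupHyp_eq_false hτ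
  cases hij
  rfl

theorem vcDim_range_blowupHyp [Nonempty ι] : vcDim (Set.range (blowupHyp (ι := ι))) = 1 := by
  refine le_antisymm (vcDim_le_one_of_pairwiseDisjoint pairwiseDisjoint_range_blowupHyp) ?_
  obtain ⟨i⟩ := ‹Nonempty ι›
  have hshatters : Shatters (Set.range blowupHyp) {.inr (fun _ => false, i)} :=
    shatters_singleton (Set.mem_range_self fun _ => true) (Set.mem_range_self _)
      (by rw [blowupHyp_const_true]) (blowupHyp_inr_self _ i)
  simpa using hshatters.card_le_vcDim

theorem shatters_blowupHyp_comp_blowupMap [Fintype ι] :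
    Shatters {g | ∃ h ∈ Set.range blowupHyp, ∃ t ∈ Set.range blowupMap, g = h ∘ t}
      (Finset.univ.map (Function.Embedding.inl (β := (ι → Bool) × ι))) := by
  intro l
  refine ⟨blowupHyp (l ∘ Sum.inl) ∘ blowupMap (l ∘ Sum.inl), ⟨_, ⟨_, rfl⟩, _, ⟨_, rfl⟩, rfl⟩, ?_⟩
  simp [blowupMap, blowupHyp_inr_self]

end Blowup

/-- For every `k` there exist a set `X`, a class `H` with VC
dimension `1`, and transformations `T` such that `vc(H ∘ T) ≥ k`. -/
theorem vc_composition_blowup (k : ℕ) :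
    ∃ (X : Type) (H : Set (X → Bool)) (T : Set (X → X)),
      vcDim H = 1 ∧ (k : ℕ∞) ≤ vcDim {g : X → Bool | ∃ h ∈ H, ∃ t ∈ T, g = h ∘ t} := by
  refine ⟨BlowupSpace (Fin (k + 1)), _, Set.range blowupMap, vcDim_range_blowupHyp, ?_⟩
  calc (k : ℕ∞) ≤ (k + 1 : ℕ) := by exact_mod_cast k.le_succ
    _ ≤ _ := by simpa using (shatters_blowupHyp_comp_blowupMap (ι := Fin (k + 1))).card_le_vcDim
end

section
/- Let X = {0,1}^d and let T be a collection of functions X → X. For i ∈ {1,…,d} let T_i = {x ↦ (t(x))_i : t ∈ T} be the class of Boolean functions given by the i-th output coordinate. If every T_i has VC dimension at most d_i and H ⊆ {-1,1}^X has VC dimension d_0, then for any finite set P ⊆ X of m points, the number of distinct restrictions of H∘T to P is at most (em/d_0)^{d_0} · ∏_{i=1}^d (em/d_i)^{d_i} (with the convention that a factor is 1 when d_i = 0), for m ≥ max_i d_i, m ≥ d_0. -/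
/-- `VCLE F d` means the VC dimension of `F` is at most `d`. -/
def VCLE {X : Type*} (F : Set (X → Bool)) (d : ℕ) : Prop :=
  ∀ S : Finset X, Shatters F S → S.card ≤ d

/-!
On the `m` points of `P`, a composition `h ∘ t` depends only on the restriction `τ` of `t` to `P`
and on `h` through `h ∘ τ`. The restriction `τ` is determined by its `d` coordinate restrictions,
so Sauer–Shelah bounds the number of possible `τ` by `∏ᵢ Φ(m, dᵢ)`, where
`Φ(m, k) = ∑_{j ≤ k} C(m, j)`; for each fixed `τ` the class `{h ∘ τ | h ∈ H}` is a precomposition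
of `H`, so it has VC dimension at most `d₀` and at most `Φ(m, d₀)` members.
Finally `Φ(m, k) ≤ (em/k)^k`.
-/

theorem Set.ncard_biUnion_le_ncard_mul {ι α : Type*} {R : Set ι} (hR : R.Finite)
    {s : ι → Set α} {b : ℕ} (hs : ∀ i ∈ R, (s i).ncard ≤ b) :
    (⋃ i ∈ R, s i).ncard ≤ R.ncard * b :=
  calc (⋃ i ∈ R, s i).ncard ≤ ∑ i ∈ hR.toFinset, (s i).ncard := by
        simpa using hR.toFinset.set_ncard_biUnion_le s
    _ ≤ hR.toFinset.card • b := Finset.sum_le_card_nsmul _ _ _ (by simpa using hs)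
    _ = R.ncard * b := by rw [smul_eq_mul, ncard_eq_toFinset_card R hR]

theorem Set.ncard_le_prod_ncard_image_eval {ι β : Type*} [Fintype ι] {S : Set (ι → β)}
    (hS : S.Finite) : S.ncard ≤ ∏ i, (Function.eval i '' S).ncard :=
  calc S.ncard ≤ (univ.pi fun i ↦ Function.eval i '' S).ncard :=
        ncard_le_ncard (subset_pi_eval_image univ S) (Finite.pi fun _ ↦ hS.image _)
    _ = ∏ i, (Function.eval i '' S).ncard := by
        simp only [← Nat.card_coe_set_eq, Nat.card_congr (Equiv.Set.univPi _), Nat.card_pi]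

theorem VCLE.image_comp {X Y : Type*} {F : Set (Y → Bool)} {k : ℕ} (hF : VCLE F k)
    (τ : X → Y) : VCLE ((· ∘ τ) '' F) k := by
  classical
  intro S hS
  have hinj : Set.InjOn τ S := by
    intro a ha b hb hab
    by_contra hne
    obtain ⟨_, ⟨f, -, rfl⟩, hf⟩ := hS fun z ↦ decide (z = a)
    have := (hf a ha).symm.trans ((congrArg f hab).trans (hf b hb))
    simp [Ne.symm hne] at this
  have himage : Shatters F (S.image τ) := by
    intro g
    obtain ⟨_, ⟨f, hfF, rfl⟩, hf⟩ := hS (g ∘ τ)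
    exact ⟨f, hfF, Finset.forall_mem_image.mpr hf⟩
  exact (Finset.card_image_of_injOn hinj).symm.trans_le (hF _ himage)

theorem VCLE.ncard_le_sum_choose {α : Type*} [Fintype α] {F : Set (α → Bool)} {k : ℕ}
    (hF : VCLE F k) : F.ncard ≤ ∑ j ∈ Finset.Iic k, (Fintype.card α).choose j := by
  classical
  let support (g : α → Bool) : Finset α := {x | g x}
  have support_inj : support.Injective := fun g g' h ↦ funext fun x ↦ by
    simpa [support] using congrArg (x ∈ ·) h
  let 𝒜 := F.toFinset.image support
  have hvc : 𝒜.vcDim ≤ k := Finset.sup_le fun s hs ↦ hF s fun g ↦ by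
    obtain ⟨_, hu, hsu⟩ := Finset.mem_shatterer.mp hs (Finset.filter_subset (g · = true) s)
    obtain ⟨f, hfF, rfl⟩ := Finset.mem_image.mp hu
    refine ⟨f, Set.mem_toFinset.mp hfF, fun x hx ↦ ?_⟩
    simpa [support, hx] using congrArg (x ∈ ·) hsu
  calc F.ncard = 𝒜.card := by
        rw [Set.ncard_eq_toFinset_card', Finset.card_image_of_injective _ support_inj]
    _ ≤ 𝒜.shatterer.card := 𝒜.card_le_card_shatterer
    _ ≤ ∑ j ∈ Finset.Iic 𝒜.vcDim, (Fintype.card α).choose j := Finset.card_shatterer_le_sum_vcDim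
    _ ≤ ∑ j ∈ Finset.Iic k, (Fintype.card α).choose j :=
        Finset.sum_le_sum_of_subset (Finset.Iic_subset_Iic.mpr hvc)

theorem Nat.sum_choose_le_exp_mul_div_pow {m k : ℕ} (hk : k ≤ m) :
    ∑ j ∈ Finset.Iic k, (m.choose j : ℝ) ≤ (Real.exp 1 * m / k) ^ k := by
  obtain rfl | hk0 := k.eq_zero_or_pos
  · simp [show Finset.Iic 0 = {0} from rfl]
  have hm : (0 : ℝ) < m := by exact_mod_cast hk0.trans_le hk
  -- compare with the binomial expansion of `(1 + x)^m ≤ e^{xm}`; this choice makes `e^{xm} = e^k`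
  set x : ℝ := k / m
  have hx0 : 0 < x := by positivity
  have hx1 : x ≤ 1 := div_le_one_of_le₀ (by exact_mod_cast hk) hm.le
  have key : (∑ j ∈ Finset.Iic k, (m.choose j : ℝ)) * x ^ k ≤ Real.exp 1 ^ k :=
    calc (∑ j ∈ Finset.Iic k, (m.choose j : ℝ)) * x ^ k
        ≤ ∑ j ∈ Finset.Iic k, (m.choose j : ℝ) * x ^ j := by
          rw [Finset.sum_mul]
          refine Finset.sum_le_sum fun j hj ↦ mul_le_mul_of_nonneg_left ?_ (by positivity)
          exact pow_le_pow_of_le_one hx0.le hx1 (Finset.mem_Iic.mp hj)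
      _ ≤ ∑ j ∈ Finset.range (m + 1), (m.choose j : ℝ) * x ^ j := by
          refine Finset.sum_le_sum_of_subset_of_nonneg (fun j hj ↦ ?_) fun _ _ _ ↦ by positivity
          simp only [Finset.mem_Iic, Finset.mem_range] at hj ⊢
          omega
      _ = (x + 1) ^ m := by rw [add_pow]; simp only [one_pow, mul_one, mul_comm]
      _ ≤ Real.exp x ^ m := by gcongr; linarith [Real.add_one_le_exp x]
      _ = Real.exp 1 ^ k := by
          rw [← Real.exp_nat_mul, ← Real.exp_nat_mul, mul_div_cancel₀ _ hm.ne', mul_one]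
  have hxk : 0 < x ^ k := by positivity
  calc ∑ j ∈ Finset.Iic k, (m.choose j : ℝ) ≤ Real.exp 1 ^ k / x ^ k := by
        rw [le_div_iff₀ hxk]; exact key
    _ = (Real.exp 1 * m / k) ^ k := by rw [← div_pow, div_div_eq_mul_div]

theorem ncard_restrict_comp_le {X ι : Type*} [Fintype ι] (H : Set ((ι → Bool) → Bool))
    (T : Set (X → ι → Bool)) {k : ℕ} {kᵢ : ι → ℕ} (hH : VCLE H k)
    (hT : ∀ i, VCLE {g : X → Bool | ∃ t ∈ T, g = fun x ↦ t x i} (kᵢ i)) (P : Finset X) :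
    ((fun f ↦ fun x : (P : Set X) ↦ f (x : X)) ''
        {f : X → Bool | ∃ h ∈ H, ∃ t ∈ T, f = h ∘ t}).ncard ≤
      (∑ j ∈ Finset.Iic k, P.card.choose j) * ∏ i, ∑ j ∈ Finset.Iic (kᵢ i), P.card.choose j := by
  classical
  have hcard : Fintype.card (P : Set X) = P.card := by simp
  -- transposed restrictions of `T` to `P`: `Function.eval i` gives the `i`-th coordinate
  let R : Set (ι → ↥(P : Set X) → Bool) := (fun t i x ↦ t x i) '' T
  have hcover : (fun f ↦ fun x : (P : Set X) ↦ f (x : X)) ''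
      {f : X → Bool | ∃ h ∈ H, ∃ t ∈ T, f = h ∘ t} ⊆ ⋃ σ ∈ R, (· ∘ Function.swap σ) '' H := by
    rintro _ ⟨_, ⟨h, hh, t, ht, rfl⟩, rfl⟩
    exact Set.mem_biUnion ⟨t, ht, rfl⟩ ⟨h, hh, rfl⟩
  have hcoord : ∀ i, Function.eval i '' R ⊆
      (· ∘ Subtype.val) '' {g : X → Bool | ∃ t ∈ T, g = fun x ↦ t x i} := by
    rintro i _ ⟨_, ⟨t, ht, rfl⟩, rfl⟩
    exact ⟨_, ⟨t, ht, rfl⟩, rfl⟩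
  calc _ ≤ (⋃ σ ∈ R, (· ∘ Function.swap σ) '' H).ncard := Set.ncard_le_ncard hcover
    _ ≤ R.ncard * ∑ j ∈ Finset.Iic k, P.card.choose j :=
        Set.ncard_biUnion_le_ncard_mul R.toFinite fun σ _ ↦
          hcard ▸ (hH.image_comp _).ncard_le_sum_choose
    _ ≤ (∏ i, (Function.eval i '' R).ncard) * ∑ j ∈ Finset.Iic k, P.card.choose j := by
        gcongr; exact Set.ncard_le_prod_ncard_image_eval R.toFinite
    _ ≤ (∏ i, ∑ j ∈ Finset.Iic (kᵢ i), P.card.choose j) * ∑ j ∈ Finset.Iic k, P.card.choose j := by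
        gcongr with i
        exact (Set.ncard_le_ncard (hcoord i)).trans
          (hcard ▸ ((hT i).image_comp _).ncard_le_sum_choose)
    _ = _ := mul_comm _ _

/-- Growth bound for compositions on the Boolean hypercube:
the number of restrictions of `H ∘ T` to `m` points is at most
`(em/d₀)^{d₀} · ∏ᵢ (em/dᵢ)^{dᵢ}` (a factor is `1` when the exponent is `0`). -/
theorem hypercube_growth_bound (d : ℕ)
    (H : Set ((Fin d → Bool) → Bool))
    (T : Set ((Fin d → Bool) → (Fin d → Bool)))
    (d0 : ℕ) (di : Fin d → ℕ)
    (hH : VCLE H d0)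
    (hT : ∀ i : Fin d,
      VCLE {g : (Fin d → Bool) → Bool | ∃ t ∈ T, g = fun x => t x i} (di i))
    (P : Finset (Fin d → Bool)) (m : ℕ) (hm : P.card = m)
    (hm0 : d0 ≤ m) (hmi : ∀ i, di i ≤ m) :
    (Set.ncard ((fun f => fun x : (P : Set (Fin d → Bool)) => f (x : Fin d → Bool)) ''
        {f : (Fin d → Bool) → Bool | ∃ h ∈ H, ∃ t ∈ T, f = h ∘ t}) : ℝ)
      ≤ (Real.exp 1 * m / d0) ^ d0 * ∏ i : Fin d, (Real.exp 1 * m / di i) ^ (di i) := by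
  subst hm
  calc _ ≤ (((∑ j ∈ Finset.Iic d0, P.card.choose j) *
          ∏ i, ∑ j ∈ Finset.Iic (di i), P.card.choose j : ℕ) : ℝ) := by
        exact_mod_cast ncard_restrict_comp_le H T hH hT P
    _ ≤ _ := by
        push_cast
        gcongr with i
        exacts [Nat.sum_choose_le_exp_mul_div_pow hm0, Nat.sum_choose_le_exp_mul_div_pow (hmi i)]
end

section
/- Let T be a finite nonempty set and for r = 1,…,R let ℓ_r : T → [0,1]. Define weights W_1(t) = 1 and W_{r+1}(t) = W_r(t)·exp(−η·ℓ_r(t)) for η > 0, and distributions Q_r(t) = W_r(t)/∑_{s∈T} W_r(s). Then for every t* ∈ T: ∑_{r=1}^R E_{t∼Q_r}[ℓ_r(t)] ≤ (η/8)·R + (ln|T|)/η + ∑_{r=1}^R ℓ_r(t*). -/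
open Real

lemma two_point_hoeffding {p : ℝ} (hp0 : 0 ≤ p) (hp1 : p ≤ 1) {x : ℝ} (hx : 0 ≤ x) :
    1 - p + p * Real.exp (-x) ≤ Real.exp (-(x * p) + x ^ 2 / 8) := by
  set g : ℝ → ℝ := fun y => 1 - p + p * Real.exp (-y) with hgdef
  have hgpos : ∀ y, 0 < g y := by
    intro y
    rcases eq_or_lt_of_le hp0 with h | h
    · simp [hgdef, ← h]
    · have := Real.exp_pos (-y)
      have : 0 < p * Real.exp (-y) := by positivity
      simp only [hgdef]
      nlinarith
  have hg : ∀ y, HasDerivAt g (-(p * Real.exp (-y))) y := by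
    intro y
    have h1 : HasDerivAt (fun y : ℝ => Real.exp (-y)) (-Real.exp (-y)) y := by
      simpa [Function.comp_def] using (Real.hasDerivAt_exp (-y)).comp y (hasDerivAt_neg y)
    have := (h1.const_mul p).const_add (1 - p)
    simpa [hgdef, mul_comm, mul_neg] using this
  -- φ = f'
  set φ : ℝ → ℝ := fun y => p - y / 4 - p * Real.exp (-y) / g y with hφdef
  have hφ : ∀ y, HasDerivAt φ (-(1/4) - (-(p * Real.exp (-y)) * (1 - p) / (g y) ^ 2)) y := by
    intro y
    have h1 : HasDerivAt (fun y : ℝ => p * Real.exp (-y)) (-(p * Real.exp (-y))) y := by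
      have h1 : HasDerivAt (fun y : ℝ => Real.exp (-y)) (-Real.exp (-y)) y := by
        simpa [Function.comp_def] using (Real.hasDerivAt_exp (-y)).comp y (hasDerivAt_neg y)
      simpa [mul_comm, mul_neg] using h1.const_mul p
    have hq : HasDerivAt (fun y => p * Real.exp (-y) / g y)
        ((-(p * Real.exp (-y)) * g y - p * Real.exp (-y) * (-(p * Real.exp (-y)))) / (g y) ^ 2) y :=
      h1.div (hg y) (hgpos y).ne'
    have h2 : HasDerivAt (fun y : ℝ => p - y / 4) (-(1/4)) y := by
      simpa using ((hasDerivAt_id y).div_const 4).const_sub p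
    have hg' : g y - p * Real.exp (-y) = 1 - p := by simp only [hgdef]; ring
    have hnum : -(p * Real.exp (-y)) * g y - p * Real.exp (-y) * (-(p * Real.exp (-y)))
        = -(p * Real.exp (-y)) * (1 - p) := by rw [← hg']; ring
    rw [hnum] at hq
    exact h2.sub hq
  have hφ'le : ∀ y, deriv φ y ≤ 0 := by
    intro y
    rw [(hφ y).deriv]
    have hgy : g y = 1 - p + p * Real.exp (-y) := rfl
    have he := Real.exp_pos (-y)
    have hg2 : (0:ℝ) < (g y) ^ 2 := pow_pos (hgpos y) 2
    have hA : p * Real.exp (-y) * (1 - p) / (g y) ^ 2 ≤ 1/4 := by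
      rw [div_le_iff₀ hg2, hgy]
      nlinarith [sq_nonneg ((1 - p) - p * Real.exp (-y))]
    have hrw : -(1/4) - -(p * Real.exp (-y)) * (1 - p) / g y ^ 2
        = p * Real.exp (-y) * (1 - p) / (g y) ^ 2 - 1/4 := by ring
    rw [hrw]
    linarith
  have hφanti : AntitoneOn φ (Set.Ici (0:ℝ)) :=
    antitoneOn_of_deriv_nonpos (convex_Ici 0)
      (fun y _ => (hφ y).continuousAt.continuousWithinAt)
      (fun y _ => (hφ y).differentiableAt.differentiableWithinAt)
      (fun y _ => hφ'le y)
  have hg0 : g 0 = 1 := by simp [hgdef]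
  have hφ0 : φ 0 = 0 := by simp [hφdef, hg0]
  have hφle : ∀ y : ℝ, 0 ≤ y → φ y ≤ 0 := fun y hy =>
    hφ0 ▸ hφanti Set.self_mem_Ici hy hy
  set f : ℝ → ℝ := fun y => p * y - y ^ 2 / 8 + Real.log (g y) with hfdef
  have hf : ∀ y, HasDerivAt f (φ y) y := by
    intro y
    have h1 : HasDerivAt (fun y : ℝ => p * y) p y := by
      simpa using (hasDerivAt_id y).const_mul p
    have h2 : HasDerivAt (fun y : ℝ => y ^ 2 / 8) (2 * y / 8) y := by
      simpa using (hasDerivAt_pow 2 y).div_const 8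
    have h3 : HasDerivAt (fun y => Real.log (g y)) (-(p * Real.exp (-y)) / g y) y :=
      (hg y).log (hgpos y).ne'
    have := (h1.sub h2).add h3
    refine this.congr_deriv ?_
    simp only [hφdef]
    ring
  have hfanti : AntitoneOn f (Set.Ici (0:ℝ)) :=
    antitoneOn_of_deriv_nonpos (convex_Ici 0)
      (fun y _ => (hf y).continuousAt.continuousWithinAt)
      (fun y _ => (hf y).differentiableAt.differentiableWithinAt)
      (fun y hy => by
        rw [(hf y).deriv]
        exact hφle y (le_of_lt (by simpa using hy)))
  have hf0 : f 0 = 0 := by simp [hfdef, hg0]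
  have hfx : f x ≤ 0 := hf0 ▸ hfanti Set.self_mem_Ici hx hx
  have hlog : Real.log (g x) ≤ -(x * p) + x ^ 2 / 8 := by
    simp only [hfdef] at hfx
    nlinarith
  calc g x = Real.exp (Real.log (g x)) := (Real.exp_log (hgpos x)).symm
    _ ≤ _ := Real.exp_le_exp.mpr hlog


private lemma exp_convex_seg {x η : ℝ} (hx0 : 0 ≤ x) (hx1 : x ≤ 1) :
    Real.exp (-η * x) ≤ 1 - x + x * Real.exp (-η) := by
  have h := convexOn_exp.2 (Set.mem_univ (0:ℝ)) (Set.mem_univ (-η))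
    (by linarith : (0:ℝ) ≤ 1 - x) hx0 (by ring)
  simpa [mul_comm] using h

/-- Unnormalized-weights form of the Hedge/Multiplicative
Weights regret bound with losses in `[0,1]`. -/
theorem hedge_potential_regret {T : Type*} [Fintype T] [Nonempty T]
    (R : ℕ) (ℓ : ℕ → T → ℝ) (hℓ : ∀ r t, ℓ r t ∈ Set.Icc (0 : ℝ) 1)
    (η : ℝ) (hη : 0 < η)
    (W : ℕ → T → ℝ)
    (hW0 : ∀ t, W 0 t = 1)
    (hWrec : ∀ r t, W (r + 1) t = W r t * Real.exp (-η * ℓ r t))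
    (Q : ℕ → T → ℝ) (hQ : ∀ r t, Q r t = W r t / ∑ s, W r s) :
    ∀ tstar : T,
      ∑ r ∈ Finset.range R, ∑ t, Q r t * ℓ r t
        ≤ η / 8 * R + Real.log (Fintype.card T) / η
          + ∑ r ∈ Finset.range R, ℓ r tstar := by
  intro tstar
  have hWpos : ∀ r t, 0 < W r t := by
    intro r
    induction r with
    | zero => intro t; simp [hW0]
    | succ n ih => intro t; rw [hWrec]; exact mul_pos (ih t) (Real.exp_pos _)
  set S : ℕ → ℝ := fun r => ∑ t, W r t with hSdef
  have hSpos : ∀ r, 0 < S r :=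
    fun r => Finset.sum_pos (fun t _ => hWpos r t) Finset.univ_nonempty
  set p : ℕ → ℝ := fun r => ∑ t, Q r t * ℓ r t with hpdef
  set A : ℕ → ℝ := fun r => ∑ t, W r t * ℓ r t with hAdef
  have hpA : ∀ r, p r = A r / S r := by
    intro r
    simp only [hpdef, hAdef, hSdef, hQ, Finset.sum_div]
    exact Finset.sum_congr rfl fun t _ => div_mul_eq_mul_div _ _ _
  have hAS : ∀ r, A r = S r * p r := by
    intro r
    rw [hpA r, mul_comm]
    exact (div_mul_cancel₀ (A r) (hSpos r).ne').symm
  have hp0 : ∀ r, 0 ≤ p r := by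
    intro r
    apply Finset.sum_nonneg
    intro t _
    have := (hℓ r t).1
    have hQ0 : 0 ≤ Q r t := by
      rw [hQ]; exact div_nonneg (hWpos r t).le (hSpos r).le
    positivity
  have hp1 : ∀ r, p r ≤ 1 := by
    intro r
    rw [hpA r, div_le_one (hSpos r)]
    apply Finset.sum_le_sum
    intro t _
    nlinarith [hWpos r t, (hℓ r t).2, (hℓ r t).1]
  have hstep : ∀ r, S (r + 1) ≤ S r * Real.exp (-(η * p r) + η ^ 2 / 8) := by
    intro r
    have h1 : S (r + 1) ≤ S r - A r + A r * Real.exp (-η) := by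
      have hle : ∀ t, W (r+1) t ≤ W r t * (1 - ℓ r t + ℓ r t * Real.exp (-η)) := by
        intro t
        rw [hWrec]
        exact mul_le_mul_of_nonneg_left (exp_convex_seg (hℓ r t).1 (hℓ r t).2)
          (hWpos r t).le
      calc S (r + 1) ≤ ∑ t, W r t * (1 - ℓ r t + ℓ r t * Real.exp (-η)) :=
            Finset.sum_le_sum fun t _ => hle t
        _ = ∑ t, ((W r t - W r t * ℓ r t) + (W r t * ℓ r t) * Real.exp (-η)) :=
            Finset.sum_congr rfl fun t _ => by ring
        _ = S r - A r + A r * Real.exp (-η) := by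
            simp only [hSdef, hAdef]
            rw [Finset.sum_add_distrib, Finset.sum_sub_distrib, ← Finset.sum_mul]
    have h2 : 1 - p r + p r * Real.exp (-η) ≤ Real.exp (-(η * p r) + η ^ 2 / 8) :=
      two_point_hoeffding (hp0 r) (hp1 r) hη.le
    have h3 : S r - A r + A r * Real.exp (-η)
        = S r * (1 - p r + p r * Real.exp (-η)) := by rw [hAS r]; ring
    calc S (r + 1) ≤ S r * (1 - p r + p r * Real.exp (-η)) := by rw [← h3]; exact h1
      _ ≤ S r * Real.exp (-(η * p r) + η ^ 2 / 8) :=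
          mul_le_mul_of_nonneg_left h2 (hSpos r).le
  have hpot : ∀ n, S n ≤ S 0 *
      Real.exp ((∑ r ∈ Finset.range n, -(η * p r)) + n * (η ^ 2 / 8)) := by
    intro n
    induction n with
    | zero => simp
    | succ n ih =>
      calc S (n + 1) ≤ S n * Real.exp (-(η * p n) + η ^ 2 / 8) := hstep n
        _ ≤ (S 0 * Real.exp ((∑ r ∈ Finset.range n, -(η * p r)) + n * (η ^ 2 / 8)))
            * Real.exp (-(η * p n) + η ^ 2 / 8) :=
            mul_le_mul_of_nonneg_right ih (Real.exp_pos _).le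
        _ = S 0 * Real.exp ((∑ r ∈ Finset.range (n+1), -(η * p r))
            + ((n+1 : ℕ) : ℝ) * (η ^ 2 / 8)) := by
            rw [mul_assoc, ← Real.exp_add]
            congr 1
            rw [Real.exp_eq_exp, Finset.sum_range_succ]
            push_cast
            ring
  have hWstar : W R tstar = Real.exp (∑ r ∈ Finset.range R, -(η * ℓ r tstar)) := by
    induction R with
    | zero => simp [hW0]
    | succ n ih =>
      rw [hWrec, ih, ← Real.exp_add, Finset.sum_range_succ]
      congr 1
      ring
  have hWS : W R tstar ≤ S R :=
    Finset.single_le_sum (fun t _ => (hWpos R t).le) (Finset.mem_univ tstar)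
  have hS0 : S 0 = Fintype.card T := by
    simp [hSdef, hW0, Finset.card_univ]
  have hcard : (0:ℝ) < Fintype.card T := by exact_mod_cast Fintype.card_pos
  have hchain : Real.exp (∑ r ∈ Finset.range R, -(η * ℓ r tstar))
      ≤ (Fintype.card T : ℝ) * Real.exp ((∑ r ∈ Finset.range R, -(η * p r))
        + R * (η ^ 2 / 8)) := by
    rw [← hWstar, ← hS0]
    exact hWS.trans (hpot R)
  have hlog : (∑ r ∈ Finset.range R, -(η * ℓ r tstar))
      ≤ Real.log (Fintype.card T) + ((∑ r ∈ Finset.range R, -(η * p r))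
        + R * (η ^ 2 / 8)) := by
    have := (Real.le_log_iff_exp_le (by positivity)).mpr hchain
    rwa [Real.log_mul hcard.ne' (Real.exp_pos _).ne', Real.log_exp] at this
  have hsum1 : (∑ r ∈ Finset.range R, -(η * ℓ r tstar))
      = -(η * ∑ r ∈ Finset.range R, ℓ r tstar) := by
    rw [Finset.mul_sum, ← Finset.sum_neg_distrib]
  have hsum2 : (∑ r ∈ Finset.range R, -(η * p r))
      = -(η * ∑ r ∈ Finset.range R, p r) := by
    rw [Finset.mul_sum, ← Finset.sum_neg_distrib]
  rw [hsum1, hsum2] at hlog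
  set Pt := ∑ r ∈ Finset.range R, p r with hPt
  set L := ∑ r ∈ Finset.range R, ℓ r tstar with hL
  set C := Real.log (Fintype.card T) with hC
  have hfin : η * Pt ≤ C + η * L + R * (η ^ 2 / 8) := by linarith
  have h2 : η * (η / 8 * R + C / η + L) = C + η * L + R * (η ^ 2 / 8) := by
    field_simp
    ring
  have h3 : η * Pt ≤ η * (η / 8 * R + C / η + L) := by rw [h2]; exact hfin
  have := le_of_mul_le_mul_left h3 hη
  simpa [hpdef, hPt, hL, hC] using this
end
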